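/- In ℂ² ⊗ ℂ² ⊗ ℂ², define G₁ = span{|001⟩ − |010⟩ − 2|011⟩ − 2|110⟩, |001⟩ − |010⟩ + 2|011⟩ − 2|101⟩, |001⟩ + |010⟩ − |100⟩}, G₂ = span{|000⟩ + |111⟩, |001⟩ + |010⟩ + 2|100⟩, |011⟩ + |101⟩ − |110⟩}, and G₃ = span{|000⟩ − |111⟩, |001⟩ − |010⟩ + |101⟩ + |110⟩}. Then G₁, G₂, G₃ are pairwise orthogonal subspaces of dimensions 3, 3 and 2 respectively, G₃ is a genuinely entangled subspace, and ℂ² ⊗ ℂ² ⊗ ℂ² = G₁ ⊕ G₂ ⊕ G₃ (an orthogonal decomposition of the whole three-qubit space into genuinely entangled subspaces). -/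

import Mathlib

noncomputable section

abbrev TriH (d₁ d₂ d₃ : ℕ) := EuclideanSpace ℂ (Fin d₁ × Fin d₂ × Fin d₃)

def BiprodA {d₁ d₂ d₃ : ℕ} (ψ : TriH d₁ d₂ d₃) : Prop :=
  ∃ (a : Fin d₁ → ℂ) (g : Fin d₂ × Fin d₃ → ℂ), ∀ i j k, ψ (i, j, k) = a i * g (j, k)

def BiprodB {d₁ d₂ d₃ : ℕ} (ψ : TriH d₁ d₂ d₃) : Prop :=
  ∃ (b : Fin d₂ → ℂ) (g : Fin d₁ × Fin d₃ → ℂ), ∀ i j k, ψ (i, j, k) = b j * g (i, k)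

def BiprodC {d₁ d₂ d₃ : ℕ} (ψ : TriH d₁ d₂ d₃) : Prop :=
  ∃ (c : Fin d₃ → ℂ) (g : Fin d₁ × Fin d₂ → ℂ), ∀ i j k, ψ (i, j, k) = c k * g (i, j)

def IsGME3 {d₁ d₂ d₃ : ℕ} (ψ : TriH d₁ d₂ d₃) : Prop :=
  ψ ≠ 0 ∧ ¬ BiprodA ψ ∧ ¬ BiprodB ψ ∧ ¬ BiprodC ψ

def IsGES3 {d₁ d₂ d₃ : ℕ} (V : Submodule ℂ (TriH d₁ d₂ d₃)) : Prop :=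
  ∀ ψ ∈ V, ψ ≠ 0 → IsGME3 ψ

def ket (i j k : Fin 2) : TriH 2 2 2 := WithLp.toLp 2 (fun p => if p = (i, j, k) then 1 else 0)

def G₁ : Submodule ℂ (TriH 2 2 2) :=
  Submodule.span ℂ
    {ket 0 0 1 - ket 0 1 0 - (2 : ℂ) • ket 0 1 1 - (2 : ℂ) • ket 1 1 0,
     ket 0 0 1 - ket 0 1 0 + (2 : ℂ) • ket 0 1 1 - (2 : ℂ) • ket 1 0 1,
     ket 0 0 1 + ket 0 1 0 - ket 1 0 0}

def G₂ : Submodule ℂ (TriH 2 2 2) :=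
  Submodule.span ℂ
    {ket 0 0 0 + ket 1 1 1,
     ket 0 0 1 + ket 0 1 0 + (2 : ℂ) • ket 1 0 0,
     ket 0 1 1 + ket 1 0 1 - ket 1 1 0}

def G₃ : Submodule ℂ (TriH 2 2 2) :=
  Submodule.span ℂ
    {ket 0 0 0 - ket 1 1 1,
     ket 0 0 1 - ket 0 1 0 + ket 1 0 1 + ket 1 1 0}

/-!
A vector is biproduct across a cut exactly when the `2 × 4` flattening of its coefficient tensor
along that cut has rank at most one, so all `2 × 2` minors of the flattening vanish. For a vector
of `Gᵢ` written in the spanning vectors, in each of the three cuts two to five of these minors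
already form a polynomial system in the coefficients whose only solution is zero. The dimensions
follow from nonzero Gram determinants, and three mutually orthogonal subspaces of dimensions
`3 + 3 + 2 = 8` fill the whole space.
-/

section Biprod

variable {d₁ d₂ d₃ : ℕ} {ψ : TriH d₁ d₂ d₃}

theorem BiprodA.minor_eq (h : BiprodA ψ) (i j k i' j' k') :
    ψ (i, j, k) * ψ (i', j', k') = ψ (i, j', k') * ψ (i', j, k) := by
  obtain ⟨a, g, hg⟩ := h
  simp only [hg]
  ring

theorem BiprodB.minor_eq (h : BiprodB ψ) (i j k i' j' k') :
    ψ (i, j, k) * ψ (i', j', k') = ψ (i', j, k') * ψ (i, j', k) := by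
  obtain ⟨b, g, hg⟩ := h
  simp only [hg]
  ring

theorem BiprodC.minor_eq (h : BiprodC ψ) (i j k i' j' k') :
    ψ (i, j, k) * ψ (i', j', k') = ψ (i', j', k) * ψ (i, j, k') := by
  obtain ⟨c, g, hg⟩ := h
  simp only [hg]
  ring

theorem isGES3_of_forall_biprod {V : Submodule ℂ (TriH d₁ d₂ d₃)}
    (h : ∀ ψ ∈ V, BiprodA ψ ∨ BiprodB ψ ∨ BiprodC ψ → ψ = 0) : IsGES3 V :=
  fun ψ hψ hne ↦ ⟨hne, fun hA ↦ hne (h ψ hψ (.inl hA)), fun hB ↦ hne (h ψ hψ (.inr (.inl hB))),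
    fun hC ↦ hne (h ψ hψ (.inr (.inr hC)))⟩

end Biprod

section InnerProductSpace

variable {𝕜 E : Type*} [RCLike 𝕜] [NormedAddCommGroup E] [InnerProductSpace 𝕜 E]

open Module Matrix

theorem finrank_span_pair_of_det_gram_ne_zero {x y : E} (h : (gram 𝕜 ![x, y]).det ≠ 0) :
    finrank 𝕜 (Submodule.span 𝕜 {x, y}) = 2 := by
  have := finrank_span_eq_card (linearIndependent_of_det_gram_ne_zero h)
  rwa [range_cons_cons_empty] at this

theorem finrank_span_triple_of_det_gram_ne_zero {x y z : E} (h : (gram 𝕜 ![x, y, z]).det ≠ 0) :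
    finrank 𝕜 (Submodule.span 𝕜 {x, y, z}) = 3 := by
  have := finrank_span_eq_card (linearIndependent_of_det_gram_ne_zero h)
  rwa [range_cons, range_cons_cons_empty, Set.singleton_union] at this

theorem Submodule.IsOrtho.finrank_sup [FiniteDimensional 𝕜 E] {U V : Submodule 𝕜 E} (h : U ⟂ V) :
    finrank 𝕜 ↥(U ⊔ V) = finrank 𝕜 U + finrank 𝕜 V := by
  rw [← Submodule.finrank_sup_add_finrank_inf_eq, h.disjoint.eq_bot, finrank_bot, add_zero]

theorem sup_sup_eq_top_of_isOrtho [FiniteDimensional 𝕜 E] {U V W : Submodule 𝕜 E} (hUV : U ⟂ V)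
    (hUW : U ⟂ W) (hVW : V ⟂ W) (h : finrank 𝕜 U + finrank 𝕜 V + finrank 𝕜 W = finrank 𝕜 E) :
    U ⊔ V ⊔ W = ⊤ := by
  refine Submodule.eq_top_of_finrank_eq ?_
  rw [(Submodule.isOrtho_sup_left.mpr ⟨hUW, hVW⟩).finrank_sup, hUV.finrank_sup, h]

end InnerProductSpace

@[simp]
theorem ket_apply (i j k : Fin 2) (p : Fin 2 × Fin 2 × Fin 2) :
    ket i j k p = if p = (i, j, k) then 1 else 0 :=
  rfl

theorem inner_ket_left (i j k : Fin 2) (ψ : TriH 2 2 2) : inner ℂ (ket i j k) ψ = ψ (i, j, k) := by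
  simp [ket, PiLp.inner_apply]

theorem isOrtho_G₁_G₂ : G₁ ⟂ G₂ := by
  rw [G₁, G₂, Submodule.isOrtho_span]
  rintro x hx y hy
  rcases hx with rfl | rfl | rfl <;> rcases hy with rfl | rfl | rfl <;>
    simp +decide [inner_add_left, inner_sub_left, inner_smul_left, inner_ket_left, map_ofNat,
      one_add_one_eq_two]

theorem isOrtho_G₁_G₃ : G₁ ⟂ G₃ := by
  rw [G₁, G₃, Submodule.isOrtho_span]
  rintro x hx y hy
  rcases hx with rfl | rfl | rfl <;> rcases hy with rfl | rfl <;>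
    simp +decide [inner_add_left, inner_sub_left, inner_smul_left, inner_ket_left, map_ofNat,
      one_add_one_eq_two]

theorem isOrtho_G₂_G₃ : G₂ ⟂ G₃ := by
  rw [G₂, G₃, Submodule.isOrtho_span]
  rintro x hx y hy
  rcases hx with rfl | rfl | rfl <;> rcases hy with rfl | rfl <;>
    simp +decide [inner_add_left, inner_sub_left, inner_smul_left, inner_ket_left, map_ofNat]

theorem finrank_G₁ : Module.finrank ℂ G₁ = 3 := by
  refine finrank_span_triple_of_det_gram_ne_zero ?_
  simp +decide [Matrix.det_fin_three, Matrix.gram, inner_add_left, inner_sub_left, inner_smul_left,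
    inner_ket_left, map_ofNat, -inner_self_eq_norm_sq_to_K]
  norm_num

theorem finrank_G₂ : Module.finrank ℂ G₂ = 3 := by
  refine finrank_span_triple_of_det_gram_ne_zero ?_
  simp +decide [Matrix.det_fin_three, Matrix.gram, inner_add_left, inner_sub_left, inner_smul_left,
    inner_ket_left, map_ofNat, -inner_self_eq_norm_sq_to_K]
  norm_num

theorem finrank_G₃ : Module.finrank ℂ G₃ = 2 := by
  refine finrank_span_pair_of_det_gram_ne_zero ?_
  simp +decide [Matrix.det_fin_two, Matrix.gram, inner_add_left, inner_sub_left, inner_ket_left,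
    -inner_self_eq_norm_sq_to_K]
  norm_num

theorem isGES3_G₁ : IsGES3 G₁ := by
  refine isGES3_of_forall_biprod fun ψ hψ hprod ↦ ?_
  obtain ⟨α, β, γ, rfl⟩ := Submodule.mem_span_triple.mp hψ
  suffices α = 0 ∧ β = 0 ∧ γ = 0 by simp [this]
  rcases hprod with h | h | h
  · have m₁ := h.minor_eq 0 0 0 1 0 1
    have m₂ := h.minor_eq 0 0 1 1 1 0
    have m₃ := h.minor_eq 0 0 1 1 1 1
    have m₄ := h.minor_eq 0 1 0 1 1 1
    simp +decide only [PiLp.add_apply, PiLp.sub_apply, PiLp.smul_apply, ket_apply, smul_eq_mul,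
      ↓reduceIte] at m₁ m₂ m₃ m₄
    obtain rfl : β = α := by linear_combination (exp := 2) (m₃ - m₄) / 4
    obtain rfl : β = 0 := by linear_combination (exp := 2) -m₂ / 8
    exact ⟨rfl, rfl, by linear_combination (exp := 2) m₁⟩
  · have m₁ := h.minor_eq 0 0 0 0 1 1
    have m₂ := h.minor_eq 0 0 0 1 1 0
    have m₃ := h.minor_eq 0 0 1 1 1 0
    have m₄ := h.minor_eq 0 0 1 1 1 1
    have m₅ := h.minor_eq 1 0 0 1 1 1
    simp +decide only [PiLp.add_apply, PiLp.sub_apply, PiLp.smul_apply, ket_apply, smul_eq_mul,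
      ↓reduceIte] at m₁ m₂ m₃ m₄ m₅
    obtain rfl : β = 0 := by linear_combination (exp := 2) (m₄ - m₅) / 4
    obtain rfl : α = 0 := by linear_combination (exp := 2) 2 / 3 * (m₁ + m₂) - m₃ / 6
    exact ⟨rfl, rfl, by linear_combination (exp := 2) -m₁⟩
  · have m₁ := h.minor_eq 0 0 0 1 0 1
    have m₂ := h.minor_eq 0 1 0 1 0 1
    have m₃ := h.minor_eq 0 1 0 1 1 1
    have m₄ := h.minor_eq 1 0 0 1 1 1
    simp +decide only [PiLp.add_apply, PiLp.sub_apply, PiLp.smul_apply, ket_apply, smul_eq_mul,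
      ↓reduceIte] at m₁ m₂ m₃ m₄
    obtain rfl : α = 0 := by linear_combination (exp := 2) -(m₃ + m₄) / 4
    obtain rfl : β = 0 := by linear_combination (exp := 2) m₂ / 2
    exact ⟨rfl, rfl, by linear_combination (exp := 2) m₁⟩

theorem isGES3_G₂ : IsGES3 G₂ := by
  refine isGES3_of_forall_biprod fun ψ hψ hprod ↦ ?_
  obtain ⟨α, β, γ, rfl⟩ := Submodule.mem_span_triple.mp hψ
  suffices α = 0 ∧ β = 0 ∧ γ = 0 by simp [this]
  rcases hprod with h | h | h
  · have m₁ := h.minor_eq 0 0 0 1 0 1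
    have m₂ := h.minor_eq 0 0 0 1 1 0
    have m₃ := h.minor_eq 0 0 0 1 1 1
    have m₄ := h.minor_eq 0 0 1 1 1 1
    simp +decide only [PiLp.add_apply, PiLp.sub_apply, PiLp.smul_apply, ket_apply, smul_eq_mul,
      ↓reduceIte] at m₁ m₂ m₃ m₄
    obtain rfl : β = 0 := by linear_combination (exp := 2) -(m₁ + m₂) / 4
    exact ⟨by linear_combination (exp := 2) m₃, rfl, by linear_combination (exp := 2) -m₄⟩
  · have m₁ := h.minor_eq 0 0 0 0 1 1
    have m₂ := h.minor_eq 0 0 0 1 1 0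
    have m₃ := h.minor_eq 0 0 0 1 1 1
    have m₄ := h.minor_eq 0 0 1 1 1 1
    simp +decide only [PiLp.add_apply, PiLp.sub_apply, PiLp.smul_apply, ket_apply, smul_eq_mul,
      ↓reduceIte] at m₁ m₂ m₃ m₄
    obtain rfl : β = 0 := by linear_combination (exp := 2) -(m₁ + m₂) / 3
    exact ⟨by linear_combination (exp := 2) m₃, rfl, by linear_combination (exp := 2) -m₄⟩
  · have m₁ := h.minor_eq 0 0 0 0 1 1
    have m₂ := h.minor_eq 0 0 0 1 0 1
    have m₃ := h.minor_eq 0 0 0 1 1 1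
    have m₄ := h.minor_eq 0 1 0 1 1 1
    simp +decide only [PiLp.add_apply, PiLp.sub_apply, PiLp.smul_apply, ket_apply, smul_eq_mul,
      ↓reduceIte] at m₁ m₂ m₃ m₄
    obtain rfl : β = 0 := by linear_combination (exp := 2) m₁ - m₂
    exact ⟨by linear_combination (exp := 2) m₃, rfl, by linear_combination (exp := 2) m₄⟩

theorem isGES3_G₃ : IsGES3 G₃ := by
  refine isGES3_of_forall_biprod fun ψ hψ hprod ↦ ?_
  obtain ⟨α, β, rfl⟩ := Submodule.mem_span_pair.mp hψ
  suffices α = 0 ∧ β = 0 by simp [this]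
  rcases hprod with h | h | h
  · have m₁ := h.minor_eq 0 0 0 1 1 1
    have m₂ := h.minor_eq 0 0 1 1 1 0
    simp +decide only [PiLp.add_apply, PiLp.sub_apply, PiLp.smul_apply, ket_apply, smul_eq_mul,
      ↓reduceIte] at m₁ m₂
    exact ⟨by linear_combination (exp := 2) -m₁, by linear_combination (exp := 2) m₂ / 2⟩
  · have m₁ := h.minor_eq 0 0 0 1 1 1
    have m₂ := h.minor_eq 0 0 1 1 1 0
    simp +decide only [PiLp.add_apply, PiLp.sub_apply, PiLp.smul_apply, ket_apply, smul_eq_mul,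
      ↓reduceIte] at m₁ m₂
    obtain rfl : β = 0 := by linear_combination (exp := 2) m₂
    exact ⟨by linear_combination (exp := 2) -m₁, rfl⟩
  · have m₁ := h.minor_eq 0 0 0 1 1 1
    have m₂ := h.minor_eq 0 1 0 1 0 1
    simp +decide only [PiLp.add_apply, PiLp.sub_apply, PiLp.smul_apply, ket_apply, smul_eq_mul,
      ↓reduceIte] at m₁ m₂
    obtain rfl : β = 0 := by linear_combination (exp := 2) -m₂
    exact ⟨by linear_combination (exp := 2) -m₁, rfl⟩

/-- `G₁, G₂, G₃` are pairwise orthogonal subspaces of dimensions `3, 3, 2`;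
each of them (in particular `G₃`) is a genuinely entangled subspace, and together they
give an orthogonal decomposition of the whole three-qubit space. -/
theorem decomposition_into_GESs :
    (∀ x ∈ G₁, ∀ y ∈ G₂, (inner ℂ x y : ℂ) = 0) ∧
    (∀ x ∈ G₁, ∀ y ∈ G₃, (inner ℂ x y : ℂ) = 0) ∧
    (∀ x ∈ G₂, ∀ y ∈ G₃, (inner ℂ x y : ℂ) = 0) ∧
    Module.finrank ℂ G₁ = 3 ∧ Module.finrank ℂ G₂ = 3 ∧ Module.finrank ℂ G₃ = 2 ∧
    IsGES3 G₁ ∧ IsGES3 G₂ ∧ IsGES3 G₃ ∧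
    G₁ ⊔ G₂ ⊔ G₃ = ⊤ := by
  refine ⟨fun x hx y hy ↦ isOrtho_G₁_G₂.inner_eq hx hy, fun x hx y hy ↦ isOrtho_G₁_G₃.inner_eq hx hy,
    fun x hx y hy ↦ isOrtho_G₂_G₃.inner_eq hx hy, finrank_G₁, finrank_G₂, finrank_G₃,
    isGES3_G₁, isGES3_G₂, isGES3_G₃, ?_⟩
  refine sup_sup_eq_top_of_isOrtho isOrtho_G₁_G₂ isOrtho_G₁_G₃ isOrtho_G₂_G₃ ?_
  rw [finrank_G₁, finrank_G₂, finrank_G₃, finrank_euclideanSpace]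
  simp
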